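/- For every positive integer k, there exists a square-complementary graph containing an induced path on k vertices. -/

import Mathlib

/-!
Take a bipartite graph in which any two vertices on the same side have a common neighbour.
Its square makes each side a clique and keeps the edges between the sides, while its complement
makes each side a clique and takes the non-edges between the sides. Hence a pair of permutations
of the two sides exchanging edges and non-edges between them is an isomorphism from the square to
the complement.

Such a graph: columns `(t, j)` and rows `(s, a, b)` with `s, t : Bool` and `j, a, b` in a set of
size at least five (so that two rows have a common column `(false, j)`), where flipping both tags
exchanges edges and non-edges. The rows `(false, a, a + 1)` and columns `(true, j)` span long
induced paths.
-/

open SimpleGraph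

/-- The square of a graph: two distinct vertices are adjacent iff they are at
distance at most 2 in `G`, i.e. adjacent or having a common neighbor. -/
def SimpleGraph.square {V : Type*} (G : SimpleGraph V) : SimpleGraph V where
  Adj u v := u ≠ v ∧ (G.Adj u v ∨ ∃ w, G.Adj u w ∧ G.Adj w v)
  symm := by
    constructor
    rintro u v ⟨h, h' | ⟨w, hw1, hw2⟩⟩
    · exact ⟨h.symm, Or.inl h'.symm⟩
    · exact ⟨h.symm, Or.inr ⟨w, hw2.symm, hw1.symm⟩⟩
  loopless := by constructor; rintro v ⟨h, -⟩; exact h rfl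

/-- A graph is square-complementary (squco) if its square is isomorphic to its
complement. -/
def SimpleGraph.IsSquco {V : Type*} (G : SimpleGraph V) : Prop :=
  Nonempty (G.square ≃g Gᶜ)

namespace SimpleGraph

variable {α β : Type*}

def bipartiteOfRel (E : α → β → Prop) : SimpleGraph (α ⊕ β) where
  Adj
    | .inl a, .inr b => E a b
    | .inr b, .inl a => E a b
    | _, _ => False
  symm := ⟨by rintro (a | b) (a' | b') h <;> exact h⟩
  loopless := ⟨by rintro (a | b) h <;> exact h⟩

variable {E : α → β → Prop}

@[simp] lemma bipartiteOfRel_adj_inl_inr (a : α) (b : β) :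
    (bipartiteOfRel E).Adj (.inl a) (.inr b) ↔ E a b := Iff.rfl

@[simp] lemma bipartiteOfRel_adj_inr_inl (a : α) (b : β) :
    (bipartiteOfRel E).Adj (.inr b) (.inl a) ↔ E a b := Iff.rfl

@[simp] lemma bipartiteOfRel_not_adj_inl_inl (a a' : α) :
    ¬ (bipartiteOfRel E).Adj (.inl a) (.inl a') := id

@[simp] lemma bipartiteOfRel_not_adj_inr_inr (b b' : β) :
    ¬ (bipartiteOfRel E).Adj (.inr b) (.inr b') := id

lemma square_bipartiteOfRel_adj_inl_inr (a : α) (b : β) :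
    (bipartiteOfRel E).square.Adj (.inl a) (.inr b) ↔ E a b := by
  simp [square]

lemma square_bipartiteOfRel_adj_inl_inl (hα : ∀ a a', a ≠ a' → ∃ b, E a b ∧ E a' b)
    (a a' : α) : (bipartiteOfRel E).square.Adj (.inl a) (.inl a') ↔ a ≠ a' := by
  refine ⟨fun h hne => h.1 (congrArg _ hne), fun hne => ⟨by simpa using hne, Or.inr ?_⟩⟩
  obtain ⟨b, hab, ha'b⟩ := hα a a' hne
  exact ⟨.inr b, hab, ha'b⟩

lemma square_bipartiteOfRel_adj_inr_inr (hβ : ∀ b b', b ≠ b' → ∃ a, E a b ∧ E a b')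
    (b b' : β) : (bipartiteOfRel E).square.Adj (.inr b) (.inr b') ↔ b ≠ b' := by
  refine ⟨fun h hne => h.1 (congrArg _ hne), fun hne => ⟨by simpa using hne, Or.inr ?_⟩⟩
  obtain ⟨a, hab, hab'⟩ := hβ b b' hne
  exact ⟨.inl a, hab, hab'⟩

theorem isSquco_bipartiteOfRel (hα : ∀ a a', a ≠ a' → ∃ b, E a b ∧ E a' b)
    (hβ : ∀ b b', b ≠ b' → ∃ a, E a b ∧ E a b') (φ : α ≃ α) (ψ : β ≃ β)
    (hE : ∀ a b, E (φ a) (ψ b) ↔ ¬ E a b) : (bipartiteOfRel E).IsSquco := by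
  refine ⟨⟨φ.sumCongr ψ, ?_⟩⟩
  rintro (a | b) (a' | b')
  · simp [square_bipartiteOfRel_adj_inl_inl hα]
  · simp [square_bipartiteOfRel_adj_inl_inr, hE]
  · rw [(bipartiteOfRel E).square.adj_comm, square_bipartiteOfRel_adj_inl_inr]
    simp [hE]
  · simp [square_bipartiteOfRel_adj_inr_inr hβ]

end SimpleGraph

lemma exists_ne_of_five_le_card {ι : Type*} [Fintype ι] (hι : 5 ≤ Fintype.card ι)
    (a b c d : ι) : ∃ j, j ≠ a ∧ j ≠ b ∧ j ≠ c ∧ j ≠ d := by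
  classical
  have hcard : ({a, b, c, d} : Finset ι).card < (Finset.univ : Finset ι).card := by
    rw [Finset.card_univ]
    exact Finset.card_le_four.trans_lt hι
  obtain ⟨j, -, hj⟩ := Finset.exists_mem_notMem_of_card_lt_card hcard
  simp only [Finset.mem_insert, Finset.mem_singleton, not_or] at hj
  exact ⟨j, hj⟩

namespace Squco

variable {ι : Type*}

def rel : Bool × ι × ι → Bool × ι → Prop
  | (false, _, _), (false, _) => True
  | (false, a, b), (true, j) => j = a ∨ j = b
  | (true, a, b), (false, j) => ¬ (j = a ∨ j = b)
  | (true, _, _), (true, _) => False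

lemma rel_not_not (s t : Bool) (a b j : ι) : rel (!s, a, b) (!t, j) ↔ ¬ rel (s, a, b) (t, j) := by
  cases s <;> cases t <;> simp [rel, or_iff_not_imp_left]

lemma exists_common_column [Fintype ι] (hι : 5 ≤ Fintype.card ι) (r r' : Bool × ι × ι) :
    ∃ c, rel r c ∧ rel r' c := by
  obtain ⟨s, a, b⟩ := r
  obtain ⟨s', a', b'⟩ := r'
  obtain ⟨j, hja, hjb, hja', hjb'⟩ := exists_ne_of_five_le_card hι a b a' b'
  refine ⟨(false, j), ?_, ?_⟩ <;> [cases s; cases s'] <;> simp [rel, *]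

lemma exists_common_row (c c' : Bool × ι) : ∃ r, rel r c ∧ rel r c' := by
  obtain ⟨t, j⟩ := c
  obtain ⟨t', j'⟩ := c'
  refine ⟨(false, j, j'), ?_, ?_⟩ <;> [cases t; cases t'] <;> simp [rel]

abbrev graph (ι : Type*) : SimpleGraph ((Bool × ι × ι) ⊕ (Bool × ι)) := bipartiteOfRel rel

theorem isSquco_graph [Fintype ι] (hι : 5 ≤ Fintype.card ι) : (graph ι).IsSquco :=
  isSquco_bipartiteOfRel (fun r r' _ => exists_common_column hι r r')
    (fun c c' _ => exists_common_row c c')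
    (Equiv.boolNot.prodCongr (Equiv.refl _)) (Equiv.boolNot.prodCongr (Equiv.refl _))
    (fun ⟨s, a, b⟩ ⟨t, j⟩ => rel_not_not s t a b j)

def pathVertex {k m : ℕ} (hkm : k < m) (i : Fin k) : (Bool × Fin m × Fin m) ⊕ (Bool × Fin m) :=
  if i.val % 2 = 0 then .inr (true, ⟨i / 2, by omega⟩)
  else .inl (false, ⟨i / 2, by omega⟩, ⟨i / 2 + 1, by omega⟩)

lemma pathVertex_injective {k m : ℕ} (hkm : k < m) : Function.Injective (pathVertex hkm) := by
  intro i j h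
  unfold pathVertex at h
  split_ifs at h <;>
    simp only [Sum.inl.injEq, Sum.inr.injEq, Prod.mk.injEq, Fin.ext_iff, true_and] at h ⊢ <;> omega

lemma graph_adj_pathVertex {k m : ℕ} (hkm : k < m) (i j : Fin k) :
    (graph (Fin m)).Adj (pathVertex hkm i) (pathVertex hkm j) ↔ (pathGraph k).Adj i j := by
  rw [pathGraph_adj]
  unfold pathVertex
  split_ifs <;>
    simp only [bipartiteOfRel_adj_inl_inr, bipartiteOfRel_adj_inr_inl, bipartiteOfRel_not_adj_inl_inl,
      bipartiteOfRel_not_adj_inr_inr, rel, Fin.ext_iff, false_iff, not_or] <;> omega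

end Squco

theorem exists_squco_with_induced_path_general (k : ℕ) :
    ∃ (V : Type) (_ : Fintype V) (G : SimpleGraph V) (f : Fin k ↪ V),
      G.IsSquco ∧ ∀ i j : Fin k, G.Adj (f i) (f j) ↔ (pathGraph k).Adj i j := by
  have hkm : k < k + 5 := by omega
  exact ⟨_, inferInstance, Squco.graph (Fin (k + 5)), ⟨_, Squco.pathVertex_injective hkm⟩,
    Squco.isSquco_graph (by simp), Squco.graph_adj_pathVertex hkm⟩

/-- For every positive `k` there is a square-complementary graph containing an
induced path on `k` vertices. -/
theorem exists_squco_with_induced_path (k : ℕ) (hk : 0 < k) :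
    ∃ (V : Type) (_ : Fintype V) (G : SimpleGraph V) (f : Fin k ↪ V),
      G.IsSquco ∧ ∀ i j : Fin k, G.Adj (f i) (f j) ↔ (pathGraph k).Adj i j :=
  exists_squco_with_induced_path_general k
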